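/- arXiv:1402.5849 — 5 statements merged into one kernel-verified Lean document; each statement's English description precedes it below -/
import Mathlib

section
/- In an F-restriction semigroup, the maximum element of the σ-class of any projection is a multiplicative identity for the semigroup; consequently every F-restriction semigroup is a monoid whose identity is the maximum projection. -/
/-- A restriction semigroup: a semigroup with unary operations `star` (`^*`) and
`plus` (`^+`) satisfying the standard identities. -/
class RestrictionSemigroup (S : Type*) extends Semigroup S where
  star : S → S
  plus : S → S
  mul_star : ∀ x : S, x * star x = x
  star_comm : ∀ x y : S, star x * star y = star y * star x
  star_mul_star : ∀ x y : S, star (x * star y) = star x * star y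
  star_mul : ∀ x y : S, star x * y = y * star (x * y)
  plus_mul : ∀ x : S, plus x * x = x
  plus_comm : ∀ x y : S, plus x * plus y = plus y * plus x
  plus_mul_plus : ∀ x y : S, plus (plus x * y) = plus x * plus y
  mul_plus : ∀ x y : S, x * plus y = plus (x * y) * x
  star_plus : ∀ x : S, star (plus x) = plus x
  plus_star : ∀ x : S, plus (star x) = star x

namespace RestrictionSemigroup

variable {S : Type*} [RestrictionSemigroup S]

/-- A projection of a restriction semigroup: an element of the form `x^*`. -/
def IsProjection (e : S) : Prop := ∃ x : S, star x = e

/-- The natural partial order: `a ≤ b` iff `a = e * b` for some projection `e`. -/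
def natLe (a b : S) : Prop := ∃ e : S, IsProjection e ∧ a = e * b

/-- The least congruence `σ` identifying all projections:
`a σ b` iff `e * a = e * b` for some projection `e`. -/
def sigmaRel (a b : S) : Prop := ∃ e : S, IsProjection e ∧ e * a = e * b

end RestrictionSemigroup

/-!
All projections are σ-related, so the maximum `m` of the σ-class of a projection lies above
every projection, in particular above `m⁺`; this forces `m = m⁺` to be a projection with
`f * m = f` for every projection `f`. Then `m * x = m * x⁺ * x = x⁺ * x = x` and
`x * m = x * x* * m = x * x* = x`.
-/

namespace RestrictionSemigroup

variable {S : Type*} [RestrictionSemigroup S]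

theorem isProjection_plus (x : S) : IsProjection (plus x) :=
  ⟨plus x, star_plus x⟩

namespace IsProjection

variable {e f : S}

theorem plus_eq (he : IsProjection e) : plus e = e := by
  obtain ⟨x, rfl⟩ := he
  exact plus_star x

theorem star_eq (he : IsProjection e) : star e = e := by
  obtain ⟨x, rfl⟩ := he
  rw [← plus_star x, star_plus, plus_star]

theorem mul_self (he : IsProjection e) : e * e = e := by
  simpa only [he.star_eq] using mul_star e

theorem mul (he : IsProjection e) (hf : IsProjection f) : IsProjection (e * f) := by
  obtain ⟨a, rfl⟩ := he
  obtain ⟨b, rfl⟩ := hf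
  exact ⟨a * star b, star_mul_star a b⟩

theorem mul_comm (he : IsProjection e) (hf : IsProjection f) : e * f = f * e := by
  obtain ⟨a, rfl⟩ := he
  obtain ⟨b, rfl⟩ := hf
  exact star_comm a b

theorem sigmaRel (he : IsProjection e) (hf : IsProjection f) : sigmaRel e f := by
  refine ⟨e * f, he.mul hf, ?_⟩
  calc e * f * e = e * e * f := by rw [mul_assoc, hf.mul_comm he, ← mul_assoc]
    _ = e * f * f := by rw [he.mul_self, mul_assoc, hf.mul_self]

end IsProjection

theorem natLe.eq_plus_mul {a b : S} (h : natLe a b) : a = plus a * b := by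
  obtain ⟨g, hg, rfl⟩ := h
  have hplus : plus (g * b) = g * plus b := by
    rw [← hg.plus_eq, plus_mul_plus, hg.plus_eq]
  rw [hplus, mul_assoc, plus_mul]

theorem isProjection_of_plus_natLe {m : S} (h : natLe (plus m) m) : IsProjection m := by
  have hm : plus m = m := by
    simpa only [(isProjection_plus m).plus_eq, plus_mul] using h.eq_plus_mul
  exact ⟨plus m, by rw [star_plus, hm]⟩

theorem IsProjection.mul_eq_of_natLe {f m : S} (hf : IsProjection f) (h : natLe f m) :
    f * m = f := by
  simpa only [hf.plus_eq] using h.eq_plus_mul.symm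

theorem mul_eq_right_of_forall_isProjection_mul_eq {m : S}
    (h : ∀ f : S, IsProjection f → f * m = f) (hm : IsProjection m) (x : S) : m * x = x := by
  calc m * x = m * plus x * x := by rw [mul_assoc, plus_mul]
    _ = x := by rw [hm.mul_comm (isProjection_plus x), h _ (isProjection_plus x), plus_mul]

theorem mul_eq_left_of_forall_isProjection_mul_eq {m : S}
    (h : ∀ f : S, IsProjection f → f * m = f) (x : S) : x * m = x := by
  calc x * m = x * (star x * m) := by rw [← mul_assoc, mul_star]
    _ = x := by rw [h _ ⟨x, rfl⟩, mul_star]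

end RestrictionSemigroup

open RestrictionSemigroup in
theorem stmt10_general {S : Type*} [RestrictionSemigroup S]
    (e m : S) (he : IsProjection e)
    (hm : sigmaRel e m ∧ ∀ b : S, sigmaRel e b → natLe b m) :
    (∀ x : S, m * x = x ∧ x * m = x) ∧
    IsProjection m ∧ (∀ f : S, IsProjection f → natLe f m) := by
  have hle : ∀ f : S, IsProjection f → natLe f m := fun f hf => hm.2 f (he.sigmaRel hf)
  have hmproj : IsProjection m := isProjection_of_plus_natLe (hle _ (isProjection_plus m))
  have habsorb : ∀ f : S, IsProjection f → f * m = f := fun f hf => hf.mul_eq_of_natLe (hle f hf)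
  exact ⟨fun x => ⟨mul_eq_right_of_forall_isProjection_mul_eq habsorb hmproj x,
    mul_eq_left_of_forall_isProjection_mul_eq habsorb x⟩, hmproj, hle⟩

open RestrictionSemigroup in
/-- In an F-restriction semigroup, the maximum element of the σ-class of any
projection is a multiplicative identity; consequently the semigroup is a monoid
whose identity is the maximum projection. -/
theorem stmt10 {S : Type*} [RestrictionSemigroup S]
    (hF : ∀ a : S, ∃ m : S, sigmaRel a m ∧ ∀ b : S, sigmaRel a b → natLe b m)
    (e m : S) (he : IsProjection e)
    (hm : sigmaRel e m ∧ ∀ b : S, sigmaRel e b → natLe b m) :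
    (∀ x : S, m * x = x ∧ x * m = x) ∧
    IsProjection m ∧ (∀ f : S, IsProjection f → natLe f m) :=
  stmt10_general e m he hm
end

section
/- A W-product W(T,Y) is a monoid if and only if the semilattice Y has a greatest element (identity), if and only if W(T,Y) is F-restriction. -/
/-- The underlying set of the W-product `W(T,Y)`: pairs `(t * y, t)`. -/
def WProd {T Y : Type*} [Monoid T] [SemilatticeInf Y] (act : T → Y → Y) : Type _ :=
  {p : Y × T // ∃ y : Y, p.1 = act p.2 y}

/-- The multiplication of the W-product:
`(t * y, t)(s * x, s) = (t * y ⊓ (t s) * x, t s)`. -/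
noncomputable def wmul {T Y : Type*} [Monoid T] [SemilatticeInf Y] (act : T → Y → Y)
    (hideal : ∀ (t : T) (y x : Y), x ≤ act t y → ∃ z : Y, x = act t z)
    (a b : WProd act) : WProd act :=
  ⟨(a.1.1 ⊓ act (a.1.2 * b.1.2) (Classical.choose b.2), a.1.2 * b.1.2), by
    obtain ⟨z, hz⟩ :=
      hideal (a.1.2 * b.1.2) (Classical.choose b.2)
        (a.1.1 ⊓ act (a.1.2 * b.1.2) (Classical.choose b.2)) inf_le_right
    exact ⟨z, hz⟩⟩


/-!
An identity `e` of `W(T,Y)` satisfies `e (y,1) = (y,1)`, which forces `y ≤ e.1.1` for every `y`,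
so `e.1.1` is a greatest element; conversely, since each `act t` is monotone, `(⊤,1)` is a
two-sided identity. Likewise `(t * ⊤, t)` is the maximum of the σ-class of `t`, while the
maximum of the σ-class of `1` lies above every projection `(y,1)`, hence its first coordinate
is a greatest element of `Y`.
-/

section WProduct

variable {T Y : Type*} [Monoid T] [SemilatticeInf Y] {act : T → Y → Y}

theorem WProd.ext {a b : WProd act} (h₁ : a.1.1 = b.1.1) (h₂ : a.1.2 = b.1.2) : a = b :=
  Subtype.ext (Prod.ext h₁ h₂)

theorem WProd.act_choose_eq (w : WProd act) : act w.1.2 (Classical.choose w.2) = w.1.1 :=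
  (Classical.choose_spec w.2).symm

theorem WProd.fst_le_act_of_isTop (hmono : ∀ t, Monotone (act t)) {top : Y}
    (htop : ∀ y, y ≤ top) (w : WProd act) : w.1.1 ≤ act w.1.2 top := by
  obtain ⟨y, hy⟩ := w.2
  exact hy ▸ hmono _ (htop y)

def WProd.proj (hact_one : ∀ y, act 1 y = y) (y : Y) : WProd act :=
  ⟨(y, 1), y, (hact_one y).symm⟩

theorem WProd.choose_proj (hact_one : ∀ y, act 1 y = y) (y : Y) :
    Classical.choose (WProd.proj hact_one y).2 = y :=
  (hact_one _).symm.trans (WProd.proj hact_one y).act_choose_eq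

variable (hideal : ∀ (t : T) (y x : Y), x ≤ act t y → ∃ z : Y, x = act t z)

theorem fst_le_of_wmul_eq_right {e w : WProd act} (h : wmul act hideal e w = w) :
    w.1.1 ≤ e.1.1 :=
  calc w.1.1 = (wmul act hideal e w).1.1 := by rw [h]
    _ ≤ e.1.1 := inf_le_left

theorem exists_isTop_of_wmul_identity (hact_one : ∀ y, act 1 y = y) {e : WProd act}
    (he : ∀ w, wmul act hideal e w = w) : ∃ top : Y, ∀ y, y ≤ top :=
  ⟨e.1.1, fun y => fst_le_of_wmul_eq_right hideal (he (WProd.proj hact_one y))⟩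

theorem proj_wmul_of_isTop (hact_one : ∀ y, act 1 y = y) {top : Y} (htop : ∀ y, y ≤ top)
    (w : WProd act) : wmul act hideal (WProd.proj hact_one top) w = w := by
  refine WProd.ext ?_ (one_mul w.1.2)
  show top ⊓ act (1 * w.1.2) (Classical.choose w.2) = w.1.1
  rw [one_mul, w.act_choose_eq]
  exact inf_eq_right.mpr (htop _)

theorem wmul_proj_of_isTop (hact_one : ∀ y, act 1 y = y) (hmono : ∀ t, Monotone (act t))
    {top : Y} (htop : ∀ y, y ≤ top) (w : WProd act) :
    wmul act hideal w (WProd.proj hact_one top) = w := by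
  refine WProd.ext ?_ (mul_one w.1.2)
  show w.1.1 ⊓ act (w.1.2 * 1) (Classical.choose (WProd.proj hact_one top).2) = w.1.1
  rw [mul_one, WProd.choose_proj]
  exact inf_eq_left.mpr (w.fst_le_act_of_isTop hmono htop)

end WProduct

/-- F-restriction is encoded through the description of `σ` and of the natural partial order on
`W(T,Y)`: `(a,t) σ (b,s)` iff `t = s`, and then `(a,t) ≤ (b,t)` iff `a ≤ b`. -/
theorem stmt14_general {T Y : Type*} [Monoid T] [SemilatticeInf Y] (act : T → Y → Y)
    -- `act` is a left action
    (hact_one : ∀ y : Y, act 1 y = y)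
    -- by order-embeddings
    (hemb : ∀ (t : T) (y y' : Y), act t y ≤ act t y' ↔ y ≤ y')
    -- whose ranges are order ideals
    (hideal : ∀ (t : T) (y x : Y), x ≤ act t y → ∃ z : Y, x = act t z) :
    -- `W(T,Y)` is a monoid:
    ((∃ e : WProd act, ∀ w : WProd act,
        wmul act hideal e w = w ∧ wmul act hideal w e = w) ↔
      -- iff `Y` has an identity (greatest element):
      (∃ top : Y, ∀ y : Y, y ≤ top)) ∧
    -- iff `W(T,Y)` is F-restriction:
    ((∃ top : Y, ∀ y : Y, y ≤ top) ↔
      (∀ t : T, ∃ m : WProd act, m.1.2 = t ∧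
        ∀ w : WProd act, w.1.2 = t → w.1.1 ≤ m.1.1)) := by
  have hmono : ∀ t, Monotone (act t) := fun t y y' => (hemb t y y').2
  refine ⟨⟨?_, ?_⟩, ⟨?_, ?_⟩⟩
  · rintro ⟨e, he⟩
    exact exists_isTop_of_wmul_identity hideal hact_one fun w => (he w).1
  · rintro ⟨top, htop⟩
    exact ⟨WProd.proj hact_one top, fun w =>
      ⟨proj_wmul_of_isTop hideal hact_one htop w, wmul_proj_of_isTop hideal hact_one hmono htop w⟩⟩
  · rintro ⟨top, htop⟩ t
    exact ⟨⟨(act t top, t), top, rfl⟩, rfl, fun w hw => hw ▸ w.fst_le_act_of_isTop hmono htop⟩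
  · intro hmax
    obtain ⟨m, -, hm⟩ := hmax 1
    exact ⟨m.1.1, fun y => hm (WProd.proj hact_one y) rfl⟩

/-- A W-product `W(T,Y)` (given by a left action of a monoid `T` on a
semilattice `Y` by order-embeddings whose ranges are order ideals) is a monoid
(has a two-sided multiplicative identity) iff `Y` has a greatest element
(an identity for `⊓`) iff `W(T,Y)` is F-restriction. Here F-restriction is
expressed via the description of `σ` and of the natural partial order on
`W(T,Y)`: `(a,t) σ (b,s)` iff `t = s`, and then `(a,t) ≤ (b,t)` iff `a ≤ b`;
so every σ-class has a maximum iff for each `t` there is a maximum element of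
`W(T,Y)` with second coordinate `t`. -/
theorem stmt14 {T Y : Type*} [Monoid T] [SemilatticeInf Y] (act : T → Y → Y)
    -- `act` is a left action
    (hact_one : ∀ y : Y, act 1 y = y)
    (hact_mul : ∀ (s t : T) (y : Y), act (s * t) y = act s (act t y))
    -- by order-embeddings
    (hemb : ∀ (t : T) (y y' : Y), act t y ≤ act t y' ↔ y ≤ y')
    -- whose ranges are order ideals
    (hideal : ∀ (t : T) (y x : Y), x ≤ act t y → ∃ z : Y, x = act t z) :
    -- `W(T,Y)` is a monoid:
    ((∃ e : WProd act, ∀ w : WProd act,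
        wmul act hideal e w = w ∧ wmul act hideal w e = w) ↔
      -- iff `Y` has an identity (greatest element):
      (∃ top : Y, ∀ y : Y, y ≤ top)) ∧
    -- iff `W(T,Y)` is F-restriction:
    ((∃ top : Y, ∀ y : Y, y ≤ top) ↔
      (∀ t : T, ∃ m : WProd act, m.1.2 = t ∧
        ∀ w : WProd act, w.1.2 = t → w.1.1 ≤ m.1.1)) :=
  stmt14_general act hact_one hemb hideal
end

section
/- Let * be an order-preserving left action of a monoid T on a poset X, let Y ⊆ X be an order ideal of X that is a meet-semilattice under the induced order, and suppose the induced partial action · of T on Y (t·y defined iff t*y ∈ Y, in which case t·y = t*y) satisfies axioms (A),(B),(C), where ∘ denotes the reverse right partial action. Assume additionally that for all t ∈ T, x ∈ X, y ∈ Y: if x ≤ t*y then x = t*z for some z ≤ y. Then for any x, y ∈ Y and s ∈ T such that x∘s is defined, the meet x ∧ s*y exists in X and equals s·((x∘s) ∧ y). -/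
/-!
A common lower bound `c` of `s * w` and `s * y` lies in `Y`, so it lifts along both:
`c = s * z = s * z'` with `z ≤ w` and `z' ≤ y`. Injectivity of `s *` on `Y ∩ s⁻¹ Y` forces
`z = z'`, a common lower bound of `w` and `y`, hence `z ≤ m` and `c ≤ s * m`.
-/

section

variable {X : Type*} [PartialOrder X]

theorem isGLB_pair_of_isLowerSet {Y : Set X} (hY : IsLowerSet Y) {w y m : X} (hw : w ∈ Y)
    (hmw : m ≤ w) (hmy : m ≤ y) (hmax : ∀ c ∈ Y, c ≤ w → c ≤ y → c ≤ m) :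
    IsGLB {w, y} m := by
  refine ⟨by simp [hmw, hmy], fun c hc => ?_⟩
  have hcw : c ≤ w := hc (by simp)
  exact hmax c (hY hcw hw) hcw (hc (by simp))

variable {f : X → X} {Y : Set X}

theorem exists_mem_lowerBounds_pair_of_mem_lowerBounds_image (hY : IsLowerSet Y)
    (hinj : Set.InjOn f (Y ∩ f ⁻¹' Y)) (hlift : ∀ y ∈ Y, Set.Iic (f y) ⊆ f '' Set.Iic y)
    {w y c : X} (hw : w ∈ Y) (hy : y ∈ Y) (hfw : f w ∈ Y)
    (hc : c ∈ lowerBounds {f w, f y}) :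
    ∃ z ∈ lowerBounds {w, y}, f z = c := by
  have hcw : c ≤ f w := hc (by simp)
  have hcY : c ∈ Y := hY hcw hfw
  obtain ⟨z, hzw, rfl⟩ := hlift w hw hcw
  obtain ⟨z', hz'y, hzz'⟩ := hlift y hy (hc (by simp) : f z ≤ f y)
  have hzw : z ≤ w := hzw
  have hz'y : z' ≤ y := hz'y
  have hz'z : z' = z :=
    hinj ⟨hY hz'y hy, show f z' ∈ Y from hzz' ▸ hcY⟩ ⟨hY hzw hw, hcY⟩ hzz'
  exact ⟨z, by simp [hzw, hz'z ▸ hz'y], rfl⟩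

theorem isGLB_pair_image (hf : Monotone f) (hY : IsLowerSet Y)
    (hinj : Set.InjOn f (Y ∩ f ⁻¹' Y)) (hlift : ∀ y ∈ Y, Set.Iic (f y) ⊆ f '' Set.Iic y)
    {w y m : X} (hw : w ∈ Y) (hy : y ∈ Y) (hfw : f w ∈ Y) (hm : IsGLB {w, y} m) :
    IsGLB {f w, f y} (f m) := by
  refine ⟨Set.image_pair f w y ▸ hf.mem_lowerBounds_image hm.1, fun c hc => ?_⟩
  obtain ⟨z, hz, rfl⟩ :=
    exists_mem_lowerBounds_pair_of_mem_lowerBounds_image hY hinj hlift hw hy hfw hc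
  exact hf (hm.2 hz)

end

theorem stmt16_general {T X : Type*} [PartialOrder X]
    (act : T → X → X)
    -- `act` is order-preserving
    (hmono : ∀ (t : T) (x x' : X), x ≤ x' → act t x ≤ act t x')
    (Y : Set X)
    -- `Y` is an order ideal of `X`
    (hYideal : ∀ x y : X, y ∈ Y → x ≤ y → x ∈ Y)
    -- (B): the induced partial maps on `Y` are order-reflecting (hence
    -- order-isomorphisms onto their ranges)
    (hB : ∀ (t : T) (z w : X), z ∈ Y → w ∈ Y → act t z ∈ Y → act t w ∈ Y →
      (act t z ≤ act t w ↔ z ≤ w))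
    -- condition (5) of the paper: `x ≤ t * y` with `y ∈ Y` implies
    -- `x = t * z` for some `z ≤ y`
    (hstar : ∀ (t : T) (x y : X), y ∈ Y → x ≤ act t y → ∃ z, z ≤ y ∧ x = act t z) :
    ∀ (s : T) (x y : X), x ∈ Y → y ∈ Y →
      ∀ w : X, w ∈ Y → act s w = x →  -- `w = x ∘ s`
      ∀ m : X, m ∈ Y → m ≤ w → m ≤ y →
        (∀ c ∈ Y, c ≤ w → c ≤ y → c ≤ m) →  -- `m = (x ∘ s) ∧ y` in `Y`
      IsGLB {x, act s y} (act s m) := by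
  rintro s x y hx hy w hw rfl m - hmw hmy hmax
  have hY : IsLowerSet Y := fun a b hba ha => hYideal b a ha hba
  have hinj : Set.InjOn (act s) (Y ∩ act s ⁻¹' Y) := fun z hz z' hz' h =>
    le_antisymm ((hB s z z' hz.1 hz'.1 hz.2 hz'.2).1 h.le)
      ((hB s z' z hz'.1 hz.1 hz'.2 hz.2).1 h.ge)
  have hlift : ∀ y ∈ Y, Set.Iic (act s y) ⊆ act s '' Set.Iic y := fun y hy c hc =>
    let ⟨z, hzy, hcz⟩ := hstar s c y hy hc
    ⟨z, hzy, hcz.symm⟩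
  exact isGLB_pair_image (hmono s) hY hinj hlift hw hy hx
    (isGLB_pair_of_isLowerSet hY hw hmw hmy hmax)

/-- Let `*` (here `act`) be an order-preserving left action of a monoid `T` on a
poset `X`, and let `Y ⊆ X` be an order ideal of `X` that is a meet-semilattice
under the induced order. The induced partial action `·` of `T` on `Y`
(`t · y` defined iff `t * y ∈ Y`, and then `t · y = t * y`) is assumed to
restrict to order-isomorphisms (axiom (B) is the hypothesis `hB` below; axioms
(A) and (C) for the induced action follow from, resp. are not needed beyond,
the stated hypotheses). Suppose moreover that whenever `x ≤ t * y` with `y ∈ Y`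
there is `z ≤ y` with `x = t * z`. Then for all `x, y ∈ Y` and `s ∈ T` such that
`x ∘ s` is defined (say `x ∘ s = w`, i.e. `w ∈ Y` with `s * w = x`), the meet
`x ∧ s * y` exists in `X` and equals `s · ((x ∘ s) ∧ y)`, i.e. `s * m` where `m`
is the meet of `w` and `y` in the semilattice `Y`. -/
theorem stmt16 {T X : Type*} [Monoid T] [PartialOrder X]
    (act : T → X → X)
    -- `act` is a left action
    (hact_one : ∀ x : X, act 1 x = x)
    (hact_mul : ∀ (s t : T) (x : X), act (s * t) x = act s (act t x))
    -- `act` is order-preserving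
    (hmono : ∀ (t : T) (x x' : X), x ≤ x' → act t x ≤ act t x')
    (Y : Set X)
    -- `Y` is an order ideal of `X`
    (hYideal : ∀ x y : X, y ∈ Y → x ≤ y → x ∈ Y)
    -- (B): the induced partial maps on `Y` are order-reflecting (hence
    -- order-isomorphisms onto their ranges)
    (hB : ∀ (t : T) (z w : X), z ∈ Y → w ∈ Y → act t z ∈ Y → act t w ∈ Y →
      (act t z ≤ act t w ↔ z ≤ w))
    -- condition (5) of the paper: `x ≤ t * y` with `y ∈ Y` implies
    -- `x = t * z` for some `z ≤ y`
    (hstar : ∀ (t : T) (x y : X), y ∈ Y → x ≤ act t y → ∃ z, z ≤ y ∧ x = act t z) :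
    ∀ (s : T) (x y : X), x ∈ Y → y ∈ Y →
      ∀ w : X, w ∈ Y → act s w = x →  -- `w = x ∘ s`
      ∀ m : X, m ∈ Y → m ≤ w → m ≤ y →
        (∀ c ∈ Y, c ≤ w → c ≤ y → c ≤ m) →  -- `m = (x ∘ s) ∧ y` in `Y`
      IsGLB {x, act s y} (act s m) :=
  stmt16_general act hmono Y hYideal hB hstar
end

section
/- Let T be a monoid, Y a semilattice with identity ε, and let (*, •) be a double action of T on Y (a left action * and a right action • satisfying t*(x∧y) = t*x ∧ t*y, (x∧y)•t = x•t ∧ y•t, (t*x)•t = ε•t ∧ x, and t*(x•t) = x ∧ t*ε). Define the partial map t·y to be defined iff y ≤ ε•t, in which case t·y = t*y. Then · is a partially defined action of T on Y: (ts)·y is defined iff s·y and t·(s·y) are defined, in which case they agree; moreover for each t the map y ↦ t·y is an order-isomorphism from the principal ideal generated by ε•t onto the principal ideal generated by t*ε. -/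
/-!
For a fixed `t`, the maps `f = (t * ·)` and `g = (· • t)` satisfy `g (f x) = g ε ⊓ x` and
`f (g x) = x ⊓ f ε`, so they are mutually inverse between the principal ideals `(g ε)↓` and
`(f ε)↓`; being meet-preserving they are monotone, hence an order-isomorphism. For the
domain condition, `y ≤ (ε • t) • s` is transported by `f = (s * ·)` to `s * y ≤ ε • t`.
-/

section DoubleActionPair

variable {Y : Type*} [SemilatticeInf Y] {f g : Y → Y} {e : Y}

theorem apply_apply_eq_of_le (hgf : ∀ x, g (f x) = g e ⊓ x) {y : Y} (hy : y ≤ g e) :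
    g (f y) = y := by
  rw [hgf, inf_eq_right.mpr hy]

theorem apply_le_apply_of_le (hgf : ∀ x, g (f x) = g e ⊓ x)
    (hfg : ∀ x, f (g x) = x ⊓ f e) {y : Y} (hy : y ≤ g e) : f y ≤ f e := by
  rw [← apply_apply_eq_of_le hgf hy, hfg]
  exact inf_le_right

def iicOrderIsoOfCompat (hf : Monotone f) (hg : Monotone g)
    (hgf : ∀ x, g (f x) = g e ⊓ x) (hfg : ∀ x, f (g x) = x ⊓ f e) :
    Set.Iic (g e) ≃o Set.Iic (f e) :=
  have hgf' : ∀ x, f (g x) = f e ⊓ x := fun x => (hfg x).trans (inf_comm _ _)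
  have hfg' : ∀ x, g (f x) = x ⊓ g e := fun x => (hgf x).trans (inf_comm _ _)
  { toFun := fun y => ⟨f y, apply_le_apply_of_le hgf hfg y.2⟩
    invFun := fun x => ⟨g x, apply_le_apply_of_le hgf' hfg' x.2⟩
    left_inv := fun y => Subtype.ext (apply_apply_eq_of_le hgf y.2)
    right_inv := fun x => Subtype.ext (apply_apply_eq_of_le hgf' x.2)
    map_rel_iff' := fun {y y'} => by
      refine ⟨fun (h : f y ≤ f y') => ?_, fun h => hf h⟩
      change (y : Y) ≤ y'
      rw [← apply_apply_eq_of_le hgf y.2, ← apply_apply_eq_of_le hgf y'.2]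
      exact hg h }

theorem le_apply_iff (hf : Monotone f) (hg : Monotone g)
    (hgf : ∀ x, g (f x) = g e ⊓ x) (hfg : ∀ x, f (g x) = x ⊓ f e) {a y : Y} (ha : a ≤ e) :
    y ≤ g a ↔ y ≤ g e ∧ f y ≤ a := by
  refine ⟨fun hy => ⟨hy.trans (hg ha), ?_⟩, fun ⟨hy, hfy⟩ => ?_⟩
  · calc f y ≤ f (g a) := hf hy
      _ = a ⊓ f e := hfg a
      _ ≤ a := inf_le_left
  · calc y = g (f y) := (apply_apply_eq_of_le hgf hy).symm
      _ ≤ g a := hg hfy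

end DoubleActionPair

/-- Let `T` be a monoid, `Y` a semilattice with identity `eps` (a greatest
element), and `(l, r)` a double action of `T` on `Y`. Define the partial map
`t · y` to be defined iff `y ≤ eps • t`, in which case `t · y = t * y = l t y`.
Then `·` is a partially defined action of `T` on `Y`: `1 · y = y`;
`(ts) · y` is defined iff `s · y` and `t · (s · y)` are defined, in which case
they agree; and for each `t` the map `y ↦ t · y` is an order-isomorphism from
the principal ideal generated by `eps • t` onto the principal ideal generated
by `t * eps`. -/
theorem stmt18 {T Y : Type*} [Monoid T] [SemilatticeInf Y]
    (eps : Y) (heps : ∀ y : Y, y ≤ eps)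
    (l : T → Y → Y) (r : Y → T → Y)
    -- `l` is a left action, `r` a right action
    (hl_one : ∀ y : Y, l 1 y = y)
    (hl_mul : ∀ (s t : T) (y : Y), l (s * t) y = l s (l t y))
    (hr_one : ∀ y : Y, r y 1 = y)
    (hr_mul : ∀ (s t : T) (y : Y), r y (s * t) = r (r y s) t)
    -- both preserve meets
    (hl_inf : ∀ (t : T) (x y : Y), l t (x ⊓ y) = l t x ⊓ l t y)
    (hr_inf : ∀ (t : T) (x y : Y), r (x ⊓ y) t = r x t ⊓ r y t)
    -- compatibility conditions of a double action
    (hrl : ∀ (t : T) (x : Y), r (l t x) t = r eps t ⊓ x)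
    (hlr : ∀ (t : T) (x : Y), l t (r x t) = x ⊓ l t eps) :
    -- `1 · y` is defined and equals `y`
    (∀ y : Y, y ≤ r eps 1 ∧ l 1 y = y) ∧
    -- (PDA): `(ts) · y` is defined iff `s · y` and `t · (s · y)` are defined
    (∀ (t s : T) (y : Y), y ≤ r eps (t * s) ↔ (y ≤ r eps s ∧ l s y ≤ r eps t)) ∧
    -- ... in which case they agree
    (∀ (t s : T) (y : Y), y ≤ r eps (t * s) → l (t * s) y = l t (l s y)) ∧
    -- `y ↦ t · y` is an order-isomorphism from `(eps • t)↓` onto `(t * eps)↓`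
    (∀ t : T,
      (∀ y : Y, y ≤ r eps t → l t y ≤ l t eps) ∧
      (∀ x : Y, x ≤ l t eps → ∃ y : Y, y ≤ r eps t ∧ l t y = x) ∧
      (∀ y y' : Y, y ≤ r eps t → y' ≤ r eps t → (l t y ≤ l t y' ↔ y ≤ y'))) := by
  have hl_mono (t : T) : Monotone (l t) := Monotone.of_map_inf (hl_inf t)
  have hr_mono (t : T) : Monotone (r · t) := Monotone.of_map_inf (hr_inf t)
  let φ (t : T) := iicOrderIsoOfCompat (hl_mono t) (hr_mono t) (hrl t) (hlr t)
  refine ⟨fun y => ⟨(hr_one eps).symm ▸ heps y, hl_one y⟩, fun t s y => ?_,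
    fun t s y _ => hl_mul t s y, fun t => ⟨fun y hy => (φ t ⟨y, hy⟩).2, fun x hx => ?_,
    fun y y' hy hy' => (φ t).le_iff_le (x := ⟨y, hy⟩) (y := ⟨y', hy'⟩)⟩⟩
  · rw [hr_mul]
    exact le_apply_iff (hl_mono s) (hr_mono s) (hrl s) (hlr s) (heps _)
  · exact ⟨_, ((φ t).symm ⟨x, hx⟩).2, congrArg Subtype.val ((φ t).apply_symm_apply ⟨x, hx⟩)⟩
end

section
/- Let T be a monoid, Y a semilattice with identity ε, and (*,•) a double action of T on Y. Then in Y*_mT = {(y,t) ∈ Y × T : y ≤ t*ε}, with multiplication (x,s)(y,t) = (x ∧ s*y, st), the identity x ∧ s*y = s*((x•s) ∧ y) holds whenever x ≤ s*ε; consequently the multiplication of Y*_mT coincides with (x,s)(y,t) = (s*((x•s) ∧ y), st). -/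
theorem inf_map_eq_map_inf_of_le {Y : Type*} [SemilatticeInf Y] {f g : Y → Y} {e x : Y}
    (hf_inf : ∀ a b, f (a ⊓ b) = f a ⊓ f b) (hfg : ∀ a, f (g a) = a ⊓ f e) (hx : x ≤ f e)
    (y : Y) : x ⊓ f y = f (g x ⊓ y) := by
  rw [hf_inf, hfg, inf_eq_left.mpr hx]

theorem stmt19_general {T Y : Type*} [Monoid T] [SemilatticeInf Y]
    (eps : Y)
    (l : T → Y → Y) (r : Y → T → Y)
    -- both preserve meets
    (hl_inf : ∀ (t : T) (x y : Y), l t (x ⊓ y) = l t x ⊓ l t y)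
    -- compatibility conditions of a double action
    (hlr : ∀ (t : T) (x : Y), l t (r x t) = x ⊓ l t eps) :
    -- the key identity, valid whenever `x ≤ s * eps`
    (∀ (s : T) (x y : Y), x ≤ l s eps → x ⊓ l s y = l s (r x s ⊓ y)) ∧
    -- hence the two expressions for the product on `Y *_m T` coincide
    (∀ (s t : T) (x y : Y), x ≤ l s eps → y ≤ l t eps →
      ((x ⊓ l s y, s * t) : Y × T) = (l s (r x s ⊓ y), s * t)) := by
  have key (s : T) (x y : Y) (hx : x ≤ l s eps) : x ⊓ l s y = l s (r x s ⊓ y) :=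
    inf_map_eq_map_inf_of_le (hl_inf s) (hlr s) hx y
  exact ⟨key, fun s t x y hx _ => by rw [key s x y hx]⟩

/-- Let `T` be a monoid, `Y` a semilattice with identity `eps`, and `(l, r)` a
double action of `T` on `Y`. Then in `Y *_m T = {(y,t) : y ≤ t * eps}`, with
multiplication `(x,s)(y,t) = (x ⊓ s * y, s t)`, the identity
`x ⊓ s * y = s * ((x • s) ⊓ y)` holds whenever `x ≤ s * eps`; consequently the
multiplication of `Y *_m T` coincides with `(x,s)(y,t) = (s * ((x • s) ⊓ y), s t)`. -/
theorem stmt19 {T Y : Type*} [Monoid T] [SemilatticeInf Y]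
    (eps : Y) (heps : ∀ y : Y, y ≤ eps)
    (l : T → Y → Y) (r : Y → T → Y)
    -- `l` is a left action, `r` a right action
    (hl_one : ∀ y : Y, l 1 y = y)
    (hl_mul : ∀ (s t : T) (y : Y), l (s * t) y = l s (l t y))
    (hr_one : ∀ y : Y, r y 1 = y)
    (hr_mul : ∀ (s t : T) (y : Y), r y (s * t) = r (r y s) t)
    -- both preserve meets
    (hl_inf : ∀ (t : T) (x y : Y), l t (x ⊓ y) = l t x ⊓ l t y)
    (hr_inf : ∀ (t : T) (x y : Y), r (x ⊓ y) t = r x t ⊓ r y t)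
    -- compatibility conditions of a double action
    (hrl : ∀ (t : T) (x : Y), r (l t x) t = r eps t ⊓ x)
    (hlr : ∀ (t : T) (x : Y), l t (r x t) = x ⊓ l t eps) :
    -- the key identity, valid whenever `x ≤ s * eps`
    (∀ (s : T) (x y : Y), x ≤ l s eps → x ⊓ l s y = l s (r x s ⊓ y)) ∧
    -- hence the two expressions for the product on `Y *_m T` coincide
    (∀ (s t : T) (x y : Y), x ≤ l s eps → y ≤ l t eps →
      ((x ⊓ l s y, s * t) : Y × T) = (l s (r x s ⊓ y), s * t)) :=
  stmt19_general eps l r hl_inf hlr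
end
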